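/- arXiv:0810.1028 — 2 statements merged into one kernel-verified Lean document; each statement's English description precedes it below -/
import Mathlib

section
/- Let R be the valuation ring of a rank-1 valued field (K, w) with maximal ideal 𝔪. Suppose c ∈ 𝔪 and f ∈ R[[X]] satisfies f(c) = 0, w(f) = 0 (where w(Σ f_i X^i) = inf_i w(f_i)), and every coefficient f_i lies in 𝔪. Then the quotient g = f/(X − c) ∈ R[[X]] also satisfies w(g) = 0 and all coefficients of g lie in 𝔪. -/
open PowerSeries Filter Set

/-- An additive rank-1 (real-valued) non-archimedean valuation on a field `K`,
with values in `EReal` (real numbers on nonzero elements, `⊤` at `0`). -/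
structure AddRealValuation (K : Type*) [Field K] where
  w : K → EReal
  map_zero' : w 0 = ⊤
  finite' : ∀ x : K, x ≠ 0 → ∃ r : ℝ, w x = (r : EReal)
  map_one' : w 1 = 0
  map_mul' : ∀ x y : K, w (x * y) = w x + w y
  map_neg' : ∀ x : K, w (-x) = w x
  add_le' : ∀ x y : K, min (w x) (w y) ≤ w (x + y)

namespace AddRealValuation

variable {K : Type*} [Field K] (v : AddRealValuation K)

/-- The valuation is non-discrete: there exist elements of arbitrarily
small positive valuation. -/
def Nondiscrete : Prop := ∀ ε : ℝ, 0 < ε → ∃ x : K, 0 < v.w x ∧ v.w x < (ε : EReal)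

/-- `K` is complete with respect to `v`: every Cauchy sequence converges. -/
def IsComplete : Prop :=
  ∀ u : ℕ → K, (∀ M : ℝ, ∃ N : ℕ, ∀ m ≥ N, ∀ n ≥ N, (M : EReal) ≤ v.w (u m - u n)) →
    ∃ L : K, ∀ M : ℝ, ∃ N : ℕ, ∀ n ≥ N, (M : EReal) ≤ v.w (u n - L)

/-- The valuation ring `R = {x : K | w x ≥ 0}` of `v`. -/
def subring : Subring K where
  carrier := {x | 0 ≤ v.w x}
  zero_mem' := by show (0:EReal) ≤ v.w 0; rw [v.map_zero']; exact le_top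
  one_mem' := by show (0:EReal) ≤ v.w 1; rw [v.map_one']
  add_mem' := fun hx hy => le_trans (le_min hx hy) (v.add_le' _ _)
  mul_mem' := fun hx hy => by
    show (0:EReal) ≤ v.w _; rw [v.map_mul']; exact add_nonneg hx hy
  neg_mem' := fun {x} hx => by show (0:EReal) ≤ v.w (-x); rw [v.map_neg']; exact hx

/-- The extension of `v` to power series over `K`: the infimum of the
valuations of the coefficients. -/
noncomputable def wS (f : PowerSeries K) : EReal := ⨅ i : ℕ, v.w (PowerSeries.coeff (R := K) i f)

/-- The extension of `v` to power series over the valuation ring `R` of `v`. -/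
noncomputable def wR (f : PowerSeries v.subring) : EReal :=
  ⨅ i : ℕ, v.w ((PowerSeries.coeff (R := v.subring) i f : v.subring) : K)

/-- `f` is a convergent power series (lies in the Tate algebra `K{X}`):
the valuations of the coefficients tend to `∞`. -/
def Conv (f : PowerSeries K) : Prop :=
  ∀ M : ℝ, ∃ N : ℕ, ∀ i ≥ N, (M : EReal) ≤ v.w (PowerSeries.coeff (R := K) i f)

/-- The series `f(c) = Σ fᵢ cⁱ` (with `f` over the valuation ring `R`) converges to `0`:
the valuations of the partial sums tend to `∞`. -/
def EvalZeroR (f : PowerSeries v.subring) (c : v.subring) : Prop :=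
  ∀ M : ℝ, ∃ N : ℕ, ∀ n ≥ N,
    (M : EReal) ≤ v.w ((∑ i ∈ Finset.range n, PowerSeries.coeff (R := v.subring) i f * c ^ i : v.subring) : K)

end AddRealValuation

/-- `𝓕` is a defining family of rank-1 valuations exhibiting the domain `D`
(with fraction field `F`) as a generalized Krull domain:
(a) for each `v ∈ 𝓕` the valuation ring of `v` is the localization of `D`
at the prime `{a : v a > 0}`; (b) `⋂ D_v = D`; (c) each nonzero `a ∈ D`
satisfies `v a = 0` for all but finitely many `v ∈ 𝓕`. -/
def IsGKFamily (D : Type*) [CommRing D] [IsDomain D] (F : Type*) [Field F]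
    [Algebra D F] [IsFractionRing D F] (𝓕 : Set (AddRealValuation F)) : Prop :=
  (∀ u ∈ 𝓕, ∀ x : F, 0 ≤ u.w x ↔
    ∃ a b : D, b ≠ 0 ∧ ¬ 0 < u.w (algebraMap D F b) ∧ x * algebraMap D F b = algebraMap D F a) ∧
  (∀ x : F, (∀ u ∈ 𝓕, 0 ≤ u.w x) → ∃ a : D, x = algebraMap D F a) ∧
  (∀ a : D, a ≠ 0 → {u ∈ 𝓕 | u.w (algebraMap D F a) ≠ 0}.Finite)

/-!
Write `fᵢ` for the coefficients of `f`. The quotient is forced to be `g = Σₙ Lₙ₊₁ Xⁿ`, where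
`Lₖ = Σᵢ fₖ₊ᵢ cⁱ` are the tails of the series `f(c)`; they converge in the complete field `K`
because `w(cⁱ) → ∞`. From `Lₖ = fₖ + c Lₖ₊₁` and `L₀ = f(c) = 0` one reads off `f = (X - c) g`.
Every `Lₖ` lies in `R` as a limit of elements of `R`, so `Lₖ₊₁ = fₖ₊₁ + c Lₖ₊₂ ∈ 𝔪`.
Finally `w(g) ≤ w((X - c) g) = w(f) = 0` because `X - c` has coefficients in `R`.
-/

namespace AddRealValuation

variable {K : Type*} [Field K] (v : AddRealValuation K)

lemma min_le_w_sub (x y : K) : min (v.w x) (v.w y) ≤ v.w (x - y) := by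
  simpa [sub_eq_add_neg, v.map_neg'] using v.add_le' x (-y)

lemma le_w_mul_of_nonneg_left {a b : K} {M : EReal} (ha : 0 ≤ v.w a) (hb : M ≤ v.w b) :
    M ≤ v.w (a * b) := by
  rw [v.map_mul', ← zero_add M]
  exact add_le_add ha hb

lemma le_w_sum {ι : Type*} {M : EReal} (s : Finset ι) (u : ι → K) (h : ∀ i ∈ s, M ≤ v.w (u i)) :
    M ≤ v.w (∑ i ∈ s, u i) := by
  classical
  induction s using Finset.induction_on with
  | empty => simp [v.map_zero']
  | insert a s ha ih =>
    rw [Finset.sum_insert ha]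
    exact (le_min (h a (by simp)) (ih fun i hi => h i (by simp [hi]))).trans (v.add_le' _ _)

lemma eq_zero_of_forall_le_w {x : K} (h : ∀ M : ℝ, (M : EReal) ≤ v.w x) : x = 0 := by
  by_contra hx
  obtain ⟨r, hr⟩ := v.finite' x hx
  have := h (r + 1)
  rw [hr, EReal.coe_le_coe_iff] at this
  linarith

lemma le_w_pow {r : ℝ} {x : K} (hr : (r : EReal) ≤ v.w x) (i : ℕ) :
    ((i * r : ℝ) : EReal) ≤ v.w (x ^ i) := by
  induction i with
  | zero => simp [v.map_one']
  | succ n ih =>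
    rw [pow_succ, v.map_mul', Nat.cast_succ, add_mul, one_mul, EReal.coe_add]
    exact add_le_add ih hr

def HasLimit (u : ℕ → K) (L : K) : Prop :=
  ∀ M : ℝ, ∃ N : ℕ, ∀ n ≥ N, (M : EReal) ≤ v.w (u n - L)

variable {v}

lemma HasLimit.unique {u : ℕ → K} {a b : K} (ha : v.HasLimit u a) (hb : v.HasLimit u b) :
    a = b := by
  refine sub_eq_zero.mp (v.eq_zero_of_forall_le_w fun M => ?_)
  obtain ⟨N₁, h₁⟩ := ha M
  obtain ⟨N₂, h₂⟩ := hb M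
  have e : a - b = (u (max N₁ N₂) - b) - (u (max N₁ N₂) - a) := by ring
  rw [e]
  exact (le_min (h₂ _ le_sup_right) (h₁ _ le_sup_left)).trans (v.min_le_w_sub _ _)

lemma HasLimit.comp_succ {u : ℕ → K} {L : K} (h : v.HasLimit u L) :
    v.HasLimit (fun m => u (m + 1)) L := fun M =>
  let ⟨N, hN⟩ := h M
  ⟨N, fun n hn => hN (n + 1) (by omega)⟩

lemma HasLimit.const_add_mul {u : ℕ → K} {L : K} (h : v.HasLimit u L) (a : K) {b : K}
    (hb : 0 ≤ v.w b) : v.HasLimit (fun m => a + b * u m) (a + b * L) := fun M =>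
  let ⟨N, hN⟩ := h M
  ⟨N, fun n hn => by
    rw [show a + b * u n - (a + b * L) = b * (u n - L) by ring]
    exact v.le_w_mul_of_nonneg_left hb (hN n hn)⟩

lemma HasLimit.mul_left_of_nonneg_w {a b : ℕ → K} (ha : v.HasLimit a 0)
    (hb : ∀ i, 0 ≤ v.w (b i)) :
    v.HasLimit (fun i => b i * a i) 0 := fun M =>
  let ⟨N, hN⟩ := ha M
  ⟨N, fun n hn => by simpa using v.le_w_mul_of_nonneg_left (hb n) (by simpa using hN n hn)⟩

lemma HasLimit.le_w {u : ℕ → K} {L : K} (h : v.HasLimit u L) {M : ℝ}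
    (hu : ∀ n, (M : EReal) ≤ v.w (u n)) : (M : EReal) ≤ v.w L := by
  obtain ⟨N, hN⟩ := h M
  rw [← sub_sub_cancel (u N) L]
  exact (le_min (hu N) (hN N le_rfl)).trans (v.min_le_w_sub _ _)

lemma hasLimit_pow_zero {c : K} (hc : 0 < v.w c) : v.HasLimit (fun i => c ^ i) 0 := by
  intro M
  rcases eq_or_ne c 0 with rfl | hc₀
  · exact ⟨1, fun i hi => by simp [zero_pow (by omega : i ≠ 0), v.map_zero']⟩
  obtain ⟨r, hr⟩ := v.finite' c hc₀
  have hr₀ : 0 < r := by rw [hr] at hc; exact_mod_cast hc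
  obtain ⟨N, hN⟩ := exists_nat_ge (M / r)
  refine ⟨N, fun i hi => ?_⟩
  rw [sub_zero]
  refine (EReal.coe_le_coe_iff.mpr ?_).trans (v.le_w_pow hr.ge i)
  rw [div_le_iff₀ hr₀] at hN
  nlinarith [(Nat.cast_le.mpr hi : (N : ℝ) ≤ i)]

lemma exists_hasLimit_sum (hcomp : v.IsComplete) {a : ℕ → K} (ha : v.HasLimit a 0) :
    ∃ L, v.HasLimit (fun n => ∑ i ∈ Finset.range n, a i) L := by
  refine hcomp _ fun M => ?_
  obtain ⟨N, hN⟩ := ha M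
  have tail : ∀ m n, N ≤ m → m ≤ n →
      (M : EReal) ≤ v.w (∑ i ∈ Finset.range n, a i - ∑ i ∈ Finset.range m, a i) := by
    intro m n hm hmn
    rw [← Finset.sum_Ico_eq_sub _ hmn]
    exact v.le_w_sum _ _ fun i hi => by
      simpa using hN i (hm.trans (Finset.mem_Ico.mp hi).1)
  refine ⟨N, fun m hm n hn => ?_⟩
  rcases le_total n m with h | h
  · exact tail n m hn h
  · rw [← v.map_neg', neg_sub]
    exact tail m n hm h

end AddRealValuation

def tailSum {K : Type*} [Field K] (F : ℕ → K) (c : K) (k m : ℕ) : K :=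
  ∑ i ∈ Finset.range m, F (k + i) * c ^ i

lemma tailSum_succ {K : Type*} [Field K] (F : ℕ → K) (c : K) (k m : ℕ) :
    tailSum F c k (m + 1) = F k + c * tailSum F c (k + 1) m := by
  simp only [tailSum, Finset.sum_range_succ', Finset.mul_sum, pow_succ, add_zero, pow_zero,
    mul_one]
  rw [add_comm]
  congr 1
  refine Finset.sum_congr rfl fun i _ => ?_
  rw [show k + (i + 1) = k + 1 + i by omega]
  ring

namespace AddRealValuation

variable {K : Type*} [Field K] {v : AddRealValuation K} {F : ℕ → K} {c : K}

lemma exists_hasLimit_tailSum (hcomp : v.IsComplete) (hF : ∀ i, 0 ≤ v.w (F i))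
    (hc : 0 < v.w c) : ∃ L : ℕ → K, ∀ k, v.HasLimit (tailSum F c k) (L k) := by
  choose L hL using fun k =>
    exists_hasLimit_sum hcomp ((hasLimit_pow_zero hc).mul_left_of_nonneg_w fun i => hF (k + i))
  exact ⟨L, hL⟩

lemma eq_add_mul_of_hasLimit_tailSum {L : ℕ → K} (hc : 0 ≤ v.w c)
    (hL : ∀ k, v.HasLimit (tailSum F c k) (L k)) (k : ℕ) : L k = F k + c * L (k + 1) :=
  (hL k).comp_succ.unique (by simpa only [tailSum_succ] using (hL (k + 1)).const_add_mul (F k) hc)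

lemma nonneg_w_of_hasLimit_tailSum {L : K} {k : ℕ} (hF : ∀ i, 0 ≤ v.w (F i)) (hc : 0 ≤ v.w c)
    (hL : v.HasLimit (tailSum F c k) L) : 0 ≤ v.w L := by
  have hpow (i : ℕ) : 0 ≤ v.w (c ^ i) := by
    simpa using v.le_w_pow (r := 0) (by simpa using hc) i
  exact_mod_cast hL.le_w (M := 0) fun m => v.le_w_sum _ _ fun i _ => by
    simpa [mul_comm] using v.le_w_mul_of_nonneg_left (hpow i) (hF (k + i))

lemma exists_coeffs_div_X_sub (hcomp : v.IsComplete) (hF : ∀ i, 0 < v.w (F i))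
    (hc : 0 < v.w c) (hzero : v.HasLimit (fun n => ∑ i ∈ Finset.range n, F i * c ^ i) 0) :
    ∃ G : ℕ → K, (∀ n, 0 < v.w (G n)) ∧ F 0 = -(c * G 0) ∧
      ∀ n, F (n + 1) = G n - c * G (n + 1) := by
  have hF₀ (i : ℕ) : 0 ≤ v.w (F i) := (hF i).le
  obtain ⟨L, hL⟩ := exists_hasLimit_tailSum hcomp hF₀ hc
  have hrec := eq_add_mul_of_hasLimit_tailSum hc.le hL
  have hL₀ : L 0 = 0 := (hL 0).unique (by convert hzero using 3; simp [tailSum])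
  refine ⟨fun n => L (n + 1), fun n => ?_, ?_, fun n => ?_⟩
  · have hcL : 0 < v.w (c * L (n + 2)) := by
      rw [v.map_mul']
      exact EReal.add_pos_of_pos_of_nonneg hc (nonneg_w_of_hasLimit_tailSum hF₀ hc.le (hL _))
    show 0 < v.w (L (n + 1))
    rw [hrec (n + 1)]
    exact (lt_min (hF _) hcL).trans_le (v.add_le' _ _)
  · linear_combination hL₀ - hrec 0
  · linear_combination -hrec (n + 1)

lemma wR_le_wR_mul (h g : PowerSeries v.subring) : v.wR g ≤ v.wR (h * g) := by
  refine le_iInf fun n => ?_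
  rw [PowerSeries.coeff_mul, AddSubmonoidClass.coe_finsetSum]
  refine v.le_w_sum _ _ fun p _ => ?_
  rw [Subring.coe_mul]
  exact v.le_w_mul_of_nonneg_left (PowerSeries.coeff p.1 h).2 (iInf_le _ p.2)

end AddRealValuation

/-- If `c ∈ 𝔪`, `f ∈ R[[X]]` satisfies `f(c) = 0`, `w f = 0` and all
coefficients of `f` lie in `𝔪`, then the quotient `g = f / (X - c)` lies in `R[[X]]`
and again satisfies `w g = 0` with all coefficients in `𝔪`. -/
theorem statement4 {K : Type*} [Field K] (v : AddRealValuation K)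
    (hcomp : v.IsComplete)
    (c : v.subring) (hc : 0 < v.w (c : K))
    (f : PowerSeries v.subring) (heval : v.EvalZeroR f c)
    (hwf : v.wR f = 0)
    (hm : ∀ i : ℕ, 0 < v.w ((PowerSeries.coeff (R := v.subring) i f : v.subring) : K)) :
    ∃ g : PowerSeries v.subring,
      f = (PowerSeries.X - PowerSeries.C (R := v.subring) c) * g ∧
      v.wR g = 0 ∧
      ∀ i : ℕ, 0 < v.w ((PowerSeries.coeff (R := v.subring) i g : v.subring) : K) := by
  obtain ⟨G, hG, hG₀, hG_succ⟩ := AddRealValuation.exists_coeffs_div_X_sub hcomp hm hc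
    fun M => by simpa using heval M
  set g : PowerSeries v.subring := PowerSeries.mk fun n => ⟨G n, (hG n).le⟩
  have hfg : f = (PowerSeries.X - PowerSeries.C c) * g := by
    ext (_ | n) : 1 <;> apply Subtype.ext
    · simpa [g, sub_mul] using hG₀
    · simpa [g, sub_mul, PowerSeries.coeff_succ_X_mul] using hG_succ n
  refine ⟨g, hfg, le_antisymm ?_ (le_iInf fun n => by simpa [g] using (hG n).le), by simpa [g]⟩
  exact hwf ▸ hfg ▸ v.wR_le_wR_mul _ g
end

section
/- Let R be the valuation ring of a field K complete with respect to a non-discrete rank-1 valuation w, with maximal ideal 𝔪, and suppose D = R[[X]] is a generalized Krull domain with defining family ℱ. Then for every monic irreducible polynomial p(X) ∈ R[X] with constant term p₀ ∈ 𝔪, there exists v ∈ ℱ that is trivial on R and satisfies v(p(X)) > 0. -/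
open PowerSeries Filter Set

/-!
Take `u ∈ 𝓕` with `u p > 0`; it exists by (b), since `p` is not a unit of `R⟦X⟧` (its
constant term lies in `𝔪`). Suppose `u (C a) > 0` for some nonzero `a ∈ R`. Because `w` has
rank one, `a` divides a power of every `m ∈ 𝔪`, so `u` is positive on all of `𝔪`. Then
`u X = 0`, for otherwise (a) applied to `aᵏ / X` would make the prime `X` divide `a`. Peeling
off constant terms, `p = X p₁ + p₀`, `p₁ = X p₂ + p₁(0)`, …, keeps `u` positive and shows that
every coefficient of `p` lies in `𝔪`, contradicting monicity.
-/

namespace AddRealValuation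

variable {K : Type*} [Field K] (v : AddRealValuation K)

lemma w_pow (x : K) (k : ℕ) : v.w (x ^ k) = k • v.w x := by
  induction k with
  | zero => simpa using v.map_one'
  | succ n ih => rw [pow_succ, v.map_mul', ih, succ_nsmul]

lemma w_eq_zero_of_mul_eq_one {x y : K} (hx : 0 ≤ v.w x) (hy : 0 ≤ v.w y) (h : x * y = 1) :
    v.w x = 0 :=
  le_antisymm (by simpa [← v.map_mul', h, v.map_one'] using le_add_of_nonneg_right hy (a := v.w x))
    hx

lemma w_mul_inv_nonneg {x y : K} (hy : y ≠ 0) (h : v.w y ≤ v.w x) : 0 ≤ v.w (x * y⁻¹) := by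
  obtain ⟨s, hs⟩ := v.finite' y hy
  have hsplit : v.w (x * y⁻¹) + s = v.w x := by
    rw [← hs, ← v.map_mul', inv_mul_cancel_right₀ hy]
  by_contra hneg
  have := EReal.add_lt_add_right_coe (not_le.mp hneg) s
  rw [hsplit, zero_add, ← hs] at this
  exact this.not_ge h

lemma exists_le_w_pow {x : K} (hx : 0 < v.w x) {y : K} (hy : y ≠ 0) :
    ∃ k : ℕ, v.w y ≤ v.w (x ^ k) := by
  by_cases hx0 : x = 0
  · exact ⟨1, by simp [hx0, v.map_zero']⟩
  obtain ⟨r, hr⟩ := v.finite' x hx0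
  obtain ⟨s, hs⟩ := v.finite' y hy
  have hr0 : 0 < r := by rw [hr] at hx; exact_mod_cast hx
  obtain ⟨k, hk⟩ := exists_nat_ge (s / r)
  refine ⟨k, ?_⟩
  rw [v.w_pow, hr, hs, ← EReal.coe_nsmul, nsmul_eq_mul]
  exact_mod_cast (div_le_iff₀ hr0).mp hk

lemma dvd_of_w_le {a b : v.subring} (ha : a ≠ 0) (h : v.w a ≤ v.w b) : a ∣ b := by
  have ha' : (a : K) ≠ 0 := by exact_mod_cast ha
  refine ⟨⟨b * (a : K)⁻¹, v.w_mul_inv_nonneg ha' h⟩, Subtype.ext ?_⟩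
  simp only [MulMemClass.coe_mul]
  field_simp

lemma not_isUnit_iff_pos (r : v.subring) : ¬IsUnit r ↔ 0 < v.w r := by
  refine ⟨fun hr => ?_, fun hr ⟨s, hs⟩ => ?_⟩
  · by_contra hle
    have hr0 : v.w r = 0 := le_antisymm (not_lt.mp hle) r.2
    have hne : r ≠ 0 := fun h => by simp [h, v.map_zero'] at hr0
    exact hr (isUnit_of_dvd_one (v.dvd_of_w_le hne (by simp [hr0, v.map_one'])))
  · have hmul : (s : K) * ((s⁻¹ : v.subringˣ) : v.subring) = 1 := by
      exact_mod_cast s.mul_inv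
    rw [← hs, v.w_eq_zero_of_mul_eq_one s.1.2 (s⁻¹ : v.subringˣ).1.2 hmul] at hr
    exact lt_irrefl 0 hr

lemma exists_dvd_pow {a m : v.subring} (ha : a ≠ 0) (hm : 0 < v.w m) : ∃ k : ℕ, a ∣ m ^ k := by
  obtain ⟨k, hk⟩ := v.exists_le_w_pow hm (y := (a : K)) (by exact_mod_cast ha)
  exact ⟨k, v.dvd_of_w_le ha (by simpa using hk)⟩

end AddRealValuation

namespace IsGKFamily

section

variable {D F : Type*} [CommRing D] [IsDomain D] [Field F] [Algebra D F] [IsFractionRing D F]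
  {𝓕 : Set (AddRealValuation F)} {u : AddRealValuation F}

lemma nonneg (h : IsGKFamily D F 𝓕) (hu : u ∈ 𝓕) (a : D) : 0 ≤ u.w (algebraMap D F a) :=
  (h.1 u hu _).mpr ⟨a, 1, one_ne_zero, by simp [u.map_one'], by simp⟩

lemma w_le_of_dvd (h : IsGKFamily D F 𝓕) (hu : u ∈ 𝓕) {a b : D} (hab : a ∣ b) :
    u.w (algebraMap D F a) ≤ u.w (algebraMap D F b) := by
  obtain ⟨c, rfl⟩ := hab
  rw [map_mul, u.map_mul']
  exact le_add_of_nonneg_right (h.nonneg hu c)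

lemma w_eq_zero_of_isUnit (h : IsGKFamily D F 𝓕) (hu : u ∈ 𝓕) {a : D} (ha : IsUnit a) :
    u.w (algebraMap D F a) = 0 := by
  obtain ⟨b, hb⟩ := ha.exists_right_inv
  exact u.w_eq_zero_of_mul_eq_one (h.nonneg hu a) (h.nonneg hu b) (by rw [← map_mul, hb, map_one])

lemma exists_pos_of_not_isUnit (h : IsGKFamily D F 𝓕) {a : D} (ha0 : a ≠ 0) (ha : ¬IsUnit a) :
    ∃ u ∈ 𝓕, 0 < u.w (algebraMap D F a) := by
  by_contra! hle
  have ha0' : algebraMap D F a ≠ 0 :=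
    (IsFractionRing.injective D F).ne_iff' (map_zero _) |>.mpr ha0
  obtain ⟨b, hb⟩ := h.2.1 (algebraMap D F a)⁻¹ fun u hu => by
    have hsum : u.w (algebraMap D F a) + u.w (algebraMap D F a)⁻¹ = 0 := by
      rw [← u.map_mul', mul_inv_cancel₀ ha0', u.map_one']
    rw [le_antisymm (hle u hu) (h.nonneg hu a), zero_add] at hsum
    exact hsum.ge
  refine ha (IsUnit.of_mul_eq_one b (IsFractionRing.injective D F ?_))
  rw [map_mul, ← hb, mul_inv_cancel₀ ha0', map_one]

lemma pos_of_dvd_pow (h : IsGKFamily D F 𝓕) (hu : u ∈ 𝓕) {c d : D} {k : ℕ}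
    (hc : 0 < u.w (algebraMap D F c)) (hcd : c ∣ d ^ k) : 0 < u.w (algebraMap D F d) := by
  refine lt_of_le_of_ne (h.nonneg hu d) fun hd => ?_
  have hdk := h.w_le_of_dvd hu hcd
  rw [map_pow, u.w_pow, ← hd, nsmul_zero] at hdk
  exact hdk.not_gt hc

/-- A prime `x` of positive `u`-value divides every element of positive `u`-value: otherwise
`cᵏ / x` lies in `D_u` for large `k`, and clearing its denominator forces `x` into the
denominator. -/
lemma dvd_of_prime (h : IsGKFamily D F 𝓕) (hu : u ∈ 𝓕) {x c : D} (hx : Prime x)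
    (hxu : 0 < u.w (algebraMap D F x)) (hc : 0 < u.w (algebraMap D F c)) : x ∣ c := by
  have hinj := IsFractionRing.injective D F
  have hx0 : algebraMap D F x ≠ 0 := (hinj.ne_iff' (map_zero _)).mpr hx.ne_zero
  obtain ⟨k, hk⟩ := u.exists_le_w_pow hc hx0
  obtain ⟨f, g, -, hg, hfg⟩ := (h.1 u hu _).mp (u.w_mul_inv_nonneg hx0 hk)
  have hdvd : x ∣ c ^ k * g := ⟨f, hinj <| by
    rw [map_mul, map_mul, map_pow, mul_comm (algebraMap D F x), ← hfg]
    field_simp⟩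
  rcases hx.dvd_or_dvd hdvd with hxc | hxg
  · exact hx.dvd_of_dvd_pow hxc
  · exact absurd (hxu.trans_le (h.w_le_of_dvd hu hxg)) hg

end

section

variable {R F : Type*} [CommRing R] [IsDomain R] [Field F] [Algebra R⟦X⟧ F]
  [IsFractionRing R⟦X⟧ F] {𝓕 : Set (AddRealValuation F)} {u : AddRealValuation F}

lemma w_X_eq_zero (h : IsGKFamily R⟦X⟧ F 𝓕) (hu : u ∈ 𝓕) {a : R} (ha : a ≠ 0)
    (hCa : 0 < u.w (algebraMap R⟦X⟧ F (C a))) : u.w (algebraMap R⟦X⟧ F X) = 0 := by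
  refine le_antisymm (not_lt.mp fun hX => ha ?_) (h.nonneg hu X)
  simpa using X_dvd_iff.mp (h.dvd_of_prime hu X_prime hX hCa)

lemma not_isUnit_coeff_of_pos (h : IsGKFamily R⟦X⟧ F 𝓕) (hu : u ∈ 𝓕)
    (hX : u.w (algebraMap R⟦X⟧ F X) = 0)
    (hC : ∀ r : R, ¬IsUnit r → 0 < u.w (algebraMap R⟦X⟧ F (C r))) (n : ℕ) :
    ∀ {f : R⟦X⟧}, 0 < u.w (algebraMap R⟦X⟧ F f) → ¬IsUnit (coeff n f) := by
  have hconst {f : R⟦X⟧} (hf : 0 < u.w (algebraMap R⟦X⟧ F f)) : ¬IsUnit (constantCoeff f) :=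
    fun hunit => hf.ne' (h.w_eq_zero_of_isUnit hu (isUnit_iff_constantCoeff.mpr hunit))
  induction n with
  | zero => exact fun hf => by simpa using hconst hf
  | succ n ih =>
    intro f hf
    set f' : R⟦X⟧ := mk fun p => coeff (p + 1) f
    have hXf' : 0 < u.w (algebraMap R⟦X⟧ F (X * f')) := by
      have hsplit : X * f' = f - C (constantCoeff f) := by
        rw [eq_sub_iff_add_eq, ← eq_X_mul_shift_add_const]
      rw [hsplit, map_sub]
      exact (lt_min hf (hC _ (hconst hf))).trans_le (u.min_le_w_sub _ _)
    rw [map_mul, u.map_mul', hX, zero_add] at hXf'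
    simpa [f'] using ih hXf'

end

lemma pos_C_of_not_isUnit {K F : Type*} [Field K] {v : AddRealValuation K} [Field F]
    [Algebra v.subring⟦X⟧ F] [IsFractionRing v.subring⟦X⟧ F] {𝓕 : Set (AddRealValuation F)}
    {u : AddRealValuation F} (h : IsGKFamily v.subring⟦X⟧ F 𝓕) (hu : u ∈ 𝓕) {a : v.subring}
    (ha : a ≠ 0) (hCa : 0 < u.w (algebraMap v.subring⟦X⟧ F (C a))) {r : v.subring}
    (hr : ¬IsUnit r) : 0 < u.w (algebraMap v.subring⟦X⟧ F (C r)) := by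
  obtain ⟨k, hk⟩ := v.exists_dvd_pow ha ((v.not_isUnit_iff_pos r).mp hr)
  exact h.pos_of_dvd_pow hu hCa (by simpa using map_dvd C hk)

end IsGKFamily

theorem statement12_general {K : Type*} [Field K] (v : AddRealValuation K)
    (𝓕 : Set (AddRealValuation (FractionRing (PowerSeries v.subring))))
    (hGK : IsGKFamily (PowerSeries v.subring) (FractionRing (PowerSeries v.subring)) 𝓕)
    (p : Polynomial v.subring) (hpm : p.Monic)
    (hp0 : 0 < v.w ((p.coeff 0 : v.subring) : K)) :
    ∃ u ∈ 𝓕,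
      (∀ a : v.subring, a ≠ 0 →
        u.w (algebraMap (PowerSeries v.subring) (FractionRing (PowerSeries v.subring))
          (PowerSeries.C (R := v.subring) a)) = 0) ∧
      0 < u.w (algebraMap (PowerSeries v.subring) (FractionRing (PowerSeries v.subring))
        (p : PowerSeries v.subring)) := by
  have hp_ne : (p : v.subring⟦X⟧) ≠ 0 := by simpa using hpm.ne_zero
  have hp_nonunit : ¬IsUnit (p : v.subring⟦X⟧) := by
    rw [isUnit_iff_constantCoeff, Polynomial.constantCoeff_coe, v.not_isUnit_iff_pos]
    exact hp0
  obtain ⟨u, hu, hup⟩ := hGK.exists_pos_of_not_isUnit hp_ne hp_nonunit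
  refine ⟨u, hu, fun a ha => ?_, hup⟩
  by_contra hne
  have hCa := lt_of_le_of_ne (hGK.nonneg hu (C a)) (Ne.symm hne)
  have hlead := hGK.not_isUnit_coeff_of_pos hu (hGK.w_X_eq_zero hu ha hCa)
    (fun r => hGK.pos_C_of_not_isUnit hu ha hCa) p.natDegree hup
  simp [Polynomial.coeff_coe, hpm.coeff_natDegree] at hlead

/-- Let `K` be complete with respect to a non-discrete rank-1 valuation,
`R` its valuation ring, `𝔪` its maximal ideal, and suppose `D = R[[X]]` is a generalized
Krull domain with defining family `𝓕`. Then for every monic irreducible `p ∈ R[X]` with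
constant term in `𝔪`, there exists `u ∈ 𝓕` trivial on `R` with `u p > 0`. -/
theorem statement12 {K : Type*} [Field K] (v : AddRealValuation K)
    (hcomp : v.IsComplete) (hnd : v.Nondiscrete)
    (𝓕 : Set (AddRealValuation (FractionRing (PowerSeries v.subring))))
    (hGK : IsGKFamily (PowerSeries v.subring) (FractionRing (PowerSeries v.subring)) 𝓕)
    (p : Polynomial v.subring) (hpm : p.Monic) (hpi : Irreducible p)
    (hp0 : 0 < v.w ((p.coeff 0 : v.subring) : K)) :
    ∃ u ∈ 𝓕,
      (∀ a : v.subring, a ≠ 0 →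
        u.w (algebraMap (PowerSeries v.subring) (FractionRing (PowerSeries v.subring))
          (PowerSeries.C (R := v.subring) a)) = 0) ∧
      0 < u.w (algebraMap (PowerSeries v.subring) (FractionRing (PowerSeries v.subring))
        (p : PowerSeries v.subring)) :=
  statement12_general v 𝓕 hGK p hpm hp0
end
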